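/- Let H ⊆ ℝ^d be compact, let V ⊆ C(H) be compact (in the sup norm), and let g : ℝ → ℝ be a Tauber–Wiener function. Then for every ε > 0 there exists a positive integer K (independent of f), continuous linear functionals c_1, …, c_K on C(H), vectors w_1, …, w_K ∈ ℝ^d, and scalars b_1, …, b_K ∈ ℝ such that |f(y) − Σ_{k=1}^{K} c_k(f) · g(w_k · y + b_k)| < ε for all y ∈ H and all f ∈ V. -/
import Mathlib


/-- A function `g : ℝ → ℝ` is Tauber–Wiener if for every interval `[a,b]`, finite linear
combinations `∑ i, c i * g (λ i * x + θ i)` are dense in `C[a,b]` with the sup norm. -/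
def IsTauberWiener (g : ℝ → ℝ) : Prop :=
  ∀ a b : ℝ, a < b → ∀ f : C(Set.Icc a b, ℝ), ∀ ε : ℝ, 0 < ε →
    ∃ (n : ℕ) (c lam θ : Fin n → ℝ),
      ∀ x : Set.Icc a b, |f x - ∑ i, c i * g (lam i * (x : ℝ) + θ i)| < ε

open Real

section Aux
variable {d : ℕ}


noncomputable def cosf (H : Set (Fin d → ℝ)) (w : Fin d → ℝ) (θ : ℝ) : C(H, ℝ) :=
  ⟨fun y => Real.cos (∑ l, w l * (y : Fin d → ℝ) l + θ), by
    apply Real.continuous_cos.comp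
    exact (continuous_finset_sum _ fun l _ =>
      (continuous_const.mul ((continuous_apply l).comp continuous_subtype_val))).add
      continuous_const⟩

def Scos (H : Set (Fin d → ℝ)) : Set C(H, ℝ) := {p | ∃ w θ, p = cosf H w θ}

lemma cos_dense (H : Set (Fin d → ℝ)) [CompactSpace H] (h : C(H, ℝ)) {η : ℝ} (hη : 0 < η) :
    ∃ p ∈ Submodule.span ℝ (Scos H), dist h p < η := by
  -- the span is a subalgebra
  have one_mem : (1 : C(H, ℝ)) ∈ Submodule.span ℝ (Scos H) := by
    apply Submodule.subset_span
    refine ⟨0, 0, ?_⟩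
    ext y
    simp [cosf]
  have gen_mul : ∀ p ∈ Scos H, ∀ q ∈ Scos H, p * q ∈ Submodule.span ℝ (Scos H) := by
    rintro p ⟨w, θ, rfl⟩ q ⟨w', θ', rfl⟩
    have key : cosf H w θ * cosf H w' θ'
        = (1/2 : ℝ) • cosf H (w + w') (θ + θ') + (1/2 : ℝ) • cosf H (w - w') (θ - θ') := by
      ext y
      simp only [ContinuousMap.mul_apply, ContinuousMap.add_apply, ContinuousMap.smul_apply,
        cosf, ContinuousMap.coe_mk, smul_eq_mul, Pi.add_apply, Pi.sub_apply]
      have e1 : ∑ l, (w l + w' l) * (y : Fin d → ℝ) l + (θ + θ')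
          = (∑ l, w l * (y : Fin d → ℝ) l + θ) + (∑ l, w' l * (y : Fin d → ℝ) l + θ') := by
        rw [Finset.sum_congr rfl (fun l _ => add_mul (w l) (w' l) _), Finset.sum_add_distrib]
        ring
      have e2 : ∑ l, (w l - w' l) * (y : Fin d → ℝ) l + (θ - θ')
          = (∑ l, w l * (y : Fin d → ℝ) l + θ) - (∑ l, w' l * (y : Fin d → ℝ) l + θ') := by
        rw [Finset.sum_congr rfl (fun l _ => sub_mul (w l) (w' l) _), Finset.sum_sub_distrib]
        ring
      have key2 : ∀ U V : ℝ, Real.cos U * Real.cos V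
          = (Real.cos (U+V) + Real.cos (U-V))/2 := fun U V => by
        rw [Real.cos_add, Real.cos_sub]; ring
      rw [e1, e2, key2]
      ring
    rw [key]
    exact Submodule.add_mem _
      (Submodule.smul_mem _ _ (Submodule.subset_span ⟨_, _, rfl⟩))
      (Submodule.smul_mem _ _ (Submodule.subset_span ⟨_, _, rfl⟩))
  have mul_mem : ∀ x y : C(H, ℝ), x ∈ Submodule.span ℝ (Scos H) →
      y ∈ Submodule.span ℝ (Scos H) → x * y ∈ Submodule.span ℝ (Scos H) := by
    intro x y hx hy
    have : Submodule.span ℝ (Scos H) * Submodule.span ℝ (Scos H)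
        ≤ Submodule.span ℝ (Scos H) := by
      rw [Submodule.span_mul_span]
      apply Submodule.span_le.2
      rintro z hz
      rw [Set.mem_mul] at hz
      obtain ⟨p, hp, q, hq, rfl⟩ := hz
      exact gen_mul p hp q hq
    exact this (Submodule.mul_mem_mul hx hy)
  set A : Subalgebra ℝ C(H, ℝ) := (Submodule.span ℝ (Scos H)).toSubalgebra one_mem mul_mem
  have sep : A.SeparatesPoints := by
    intro x y hxy
    have hvx : (x : Fin d → ℝ) ≠ y := fun hc => hxy (Subtype.ext hc)
    obtain ⟨l, hl⟩ : ∃ l, (x : Fin d → ℝ) l ≠ (y : Fin d → ℝ) l := by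
      by_contra hc
      push_neg at hc
      exact hvx (funext hc)
    set a := (x : Fin d → ℝ) l
    set b := (y : Fin d → ℝ) l
    set t : ℝ := (π/2) / (1 + |a| + |b|) with ht
    have hden : (0:ℝ) < 1 + |a| + |b| := by positivity
    have htpos : 0 < t := div_pos (by positivity) hden
    set w : Fin d → ℝ := fun k => if k = l then t else 0 with hw
    refine ⟨_, ⟨cosf H w (-(π/2)), Submodule.subset_span ⟨w, -(π/2), rfl⟩, rfl⟩, ?_⟩
    have hsum : ∀ z : H, ∑ k, w k * (z : Fin d → ℝ) k = t * (z : Fin d → ℝ) l := by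
      intro z
      rw [hw]
      rw [Finset.sum_eq_single l]
      · simp
      · intro k _ hk; simp [hk]
      · simp
    have happ : ∀ z : H, cosf H w (-(π/2)) z = Real.sin (t * (z : Fin d → ℝ) l) := by
      intro z
      show Real.cos _ = _
      rw [hsum z]
      rw [← sub_eq_add_neg, Real.cos_sub_pi_div_two]
    show (cosf H w (-(π/2))) x ≠ (cosf H w (-(π/2))) y
    rw [happ x, happ y]
    have hbound : ∀ r : ℝ, |r| ≤ |a| + |b| → t * r ∈ Set.Icc (-(π/2)) (π/2) := by
      intro r hr
      have h1 : |t * r| ≤ π/2 := by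
        rw [abs_mul, abs_of_pos htpos, ht]
        rw [div_mul_eq_mul_div, div_le_iff₀ hden]
        have hπ : (0:ℝ) < π/2 := by positivity
        nlinarith [abs_nonneg r]
      exact abs_le.1 h1
    have hma : t * a ∈ Set.Icc (-(π/2)) (π/2) := hbound a (by linarith [abs_nonneg b])
    have hmb : t * b ∈ Set.Icc (-(π/2)) (π/2) := hbound b (by linarith [abs_nonneg a])
    intro hc
    have := Real.strictMonoOn_sin.injOn hma hmb hc
    exact hl (mul_left_cancel₀ (ne_of_gt htpos) this)
  have hclose := ContinuousMap.subalgebra_topologicalClosure_eq_top_of_separatesPoints A sep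
  have hmem : h ∈ A.topologicalClosure := by rw [hclose]; trivial
  have hmem2 : h ∈ closure (A : Set C(H, ℝ)) := hmem
  rw [Metric.mem_closure_iff] at hmem2
  obtain ⟨p, hp, hdist⟩ := hmem2 η hη
  exact ⟨p, hp, hdist⟩


/-- TW approximation of a cosine ridge function. -/
lemma cosApprox (H : Set (Fin d → ℝ)) [CompactSpace H]
    {g : ℝ → ℝ} (hg : IsTauberWiener g) (w : Fin d → ℝ) (θ : ℝ)
    {η : ℝ} (hη : 0 < η) :
    ∃ (n : ℕ) (c : Fin n → ℝ) (w' : Fin n → Fin d → ℝ) (b : Fin n → ℝ),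
      ∀ y : H, |Real.cos (∑ l, w l * (y : Fin d → ℝ) l + θ)
        - ∑ i, c i * g (∑ l, w' i l * (y : Fin d → ℝ) l + b i)| < η := by
  set q : C(H, ℝ) := ⟨fun y => ∑ l, w l * (y : Fin d → ℝ) l + θ, by
    exact (continuous_finset_sum _ fun l _ =>
      (continuous_const.mul ((continuous_apply l).comp continuous_subtype_val))).add
      continuous_const⟩ with hq
  set R : ℝ := ‖q‖ with hR
  have hR0 : (0:ℝ) ≤ R := norm_nonneg q
  have hab : -(R+1) < R+1 := by linarith
  set f : C(Set.Icc (-(R+1)) (R+1), ℝ) :=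
    ⟨fun x => Real.cos (x : ℝ), Real.continuous_cos.comp continuous_subtype_val⟩ with hf
  obtain ⟨n, c, lam, θ', hspec⟩ := hg _ _ hab f η hη
  refine ⟨n, c, fun i l => lam i * w l, fun i => lam i * θ + θ' i, fun y => ?_⟩
  have hmem : q y ∈ Set.Icc (-(R+1)) (R+1) := by
    have := q.norm_coe_le_norm y
    rw [Real.norm_eq_abs] at this
    constructor <;> [linarith [neg_abs_le (q y)]; linarith [le_abs_self (q y)]]
  have h1 := hspec ⟨q y, hmem⟩
  have harg : ∀ i, lam i * (q y) + θ' i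
      = ∑ l, (lam i * w l) * (y : Fin d → ℝ) l + (lam i * θ + θ' i) := by
    intro i
    simp only [hq, ContinuousMap.coe_mk]
    rw [mul_add, Finset.mul_sum, add_assoc]
    congr 1
    exact Finset.sum_congr rfl fun l _ => by ring
  have h2 : (f ⟨q y, hmem⟩ : ℝ) = Real.cos (∑ l, w l * (y : Fin d → ℝ) l + θ) := rfl
  calc |Real.cos (∑ l, w l * (y : Fin d → ℝ) l + θ)
        - ∑ i, c i * g (∑ l, (lam i * w l) * (y : Fin d → ℝ) l + (lam i * θ + θ' i))|
      = |f ⟨q y, hmem⟩ - ∑ i, c i * g (lam i * (q y) + θ' i)| := by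
        rw [h2]
        congr 1
        congr 1
        exact Finset.sum_congr rfl fun i _ => by rw [harg i]
    _ < η := h1
lemma fin_flatten {ι : Type*} [Fintype ι] {D : Type*} (data : ι → D) :
    ∃ (N : ℕ) (data' : Fin N → D), ∀ (F : D → ℝ),
      ∑ k, F (data' k) = ∑ i, F (data i) := by
  refine ⟨Fintype.card ι, data ∘ (Fintype.equivFin ι).symm, fun F => ?_⟩
  exact Equiv.sum_comp (Fintype.equivFin ι).symm (F ∘ data)

/-- Theorem 2 of Chen–Chen: TW networks are dense in `C(H)`. -/
lemma propA {d : ℕ} (H : Set (Fin d → ℝ)) [CompactSpace H]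
    {g : ℝ → ℝ} (hg : IsTauberWiener g) (h : C(H, ℝ)) {η : ℝ} (hη : 0 < η) :
    ∃ (n : ℕ) (c : Fin n → ℝ) (w : Fin n → Fin d → ℝ) (b : Fin n → ℝ),
      ∀ y : H, |h y - ∑ i, c i * g (∑ l, w i l * (y : Fin d → ℝ) l + b i)| < η := by
  obtain ⟨p, hp, hdist⟩ := cos_dense H h (half_pos hη)
  rw [Submodule.mem_span_set'] at hp
  obtain ⟨m, a, v, hrep⟩ := hp
  -- each v i is a cosine ridge function
  have hv : ∀ i : Fin m, ∃ w θ, (v i : C(H, ℝ)) = cosf H w θ := fun i => (v i).2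
  choose W Θ hWΘ using hv
  -- approximate each cosine by a TW combination
  have happ : ∀ i : Fin m, ∃ (n : ℕ) (c : Fin n → ℝ) (w' : Fin n → Fin d → ℝ)
      (b : Fin n → ℝ), ∀ y : H, |Real.cos (∑ l, W i l * (y : Fin d → ℝ) l + Θ i)
        - ∑ j, c j * g (∑ l, w' j l * (y : Fin d → ℝ) l + b j)| < η / (2 * m.succ * (|a i| + 1)) :=
    fun i => cosApprox H hg (W i) (Θ i) (by positivity)
  choose n C Wp B hB using happ
  -- flatten
  set D := ℝ × (Fin d → ℝ) × ℝ
  set data : ((i : Fin m) × Fin (n i)) → D := fun p => (a p.1 * C p.1 p.2, Wp p.1 p.2, B p.1 p.2)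
  obtain ⟨N, data', hsum⟩ := fin_flatten data
  refine ⟨N, fun k => (data' k).1, fun k => (data' k).2.1, fun k => (data' k).2.2, fun y => ?_⟩
  have key : ∀ F : D → ℝ, ∑ k, F (data' k) = ∑ i, ∑ j, F (data ⟨i, j⟩) := by
    intro F
    rw [hsum F, ← Finset.univ_sigma_univ, Finset.sum_sigma]
  set F : D → ℝ := fun dta => dta.1 * g (∑ l, dta.2.1 l * (y : Fin d → ℝ) l + dta.2.2) with hF
  have e0 : ∑ k, (data' k).1 * g (∑ l, (data' k).2.1 l * (y : Fin d → ℝ) l + (data' k).2.2)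
      = ∑ i, ∑ j, (a i * C i j) * g (∑ l, Wp i j l * (y : Fin d → ℝ) l + B i j) := key F
  rw [e0]
  have hpy : |h y - p y| ≤ η / 2 := by
    have := ContinuousMap.dist_apply_le_dist (f := h) (g := p) y
    rw [Real.dist_eq] at this
    linarith [le_of_lt hdist, this.trans (le_of_lt hdist)]
  have hpv : p y = ∑ i, a i * (v i : C(H, ℝ)) y := by
    rw [← hrep]
    rw [ContinuousMap.sum_apply]
    exact Finset.sum_congr rfl fun i _ => rfl
  -- termwise bound
  have hterm : ∀ i : Fin m,
      |a i * (v i : C(H, ℝ)) y - ∑ j, (a i * C i j) * g (∑ l, Wp i j l * (y : Fin d → ℝ) l + B i j)|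
        ≤ η / (2 * m.succ) := by
    intro i
    have hvi : (v i : C(H, ℝ)) y = Real.cos (∑ l, W i l * (y : Fin d → ℝ) l + Θ i) := by
      rw [hWΘ i]; rfl
    have hfac : a i * (v i : C(H, ℝ)) y
        - ∑ j, (a i * C i j) * g (∑ l, Wp i j l * (y : Fin d → ℝ) l + B i j)
        = a i * ((v i : C(H, ℝ)) y - ∑ j, C i j * g (∑ l, Wp i j l * (y : Fin d → ℝ) l + B i j)) := by
      rw [mul_sub, Finset.mul_sum]
      congr 1
      exact Finset.sum_congr rfl fun j _ => by ring
    rw [hfac, abs_mul, hvi]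
    have h1 := le_of_lt (hB i y)
    calc |a i| * |Real.cos (∑ l, W i l * (y : Fin d → ℝ) l + Θ i)
          - ∑ j, C i j * g (∑ l, Wp i j l * (y : Fin d → ℝ) l + B i j)|
        ≤ |a i| * (η / (2 * m.succ * (|a i| + 1))) := by
          apply mul_le_mul_of_nonneg_left h1 (abs_nonneg _)
      _ ≤ η / (2 * m.succ) := by
          have e : η / (2 * (m.succ:ℝ) * (|a i| + 1)) = η / (2 * m.succ) / (|a i| + 1) := by
            rw [div_div]
          rw [e, mul_comm, div_mul_eq_mul_div, div_le_iff₀ (by positivity)]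
          have hQ : (0:ℝ) ≤ η / (2 * m.succ) := by positivity
          nlinarith [abs_nonneg (a i)]
  calc |h y - ∑ i, ∑ j, (a i * C i j) * g (∑ l, Wp i j l * (y : Fin d → ℝ) l + B i j)|
      ≤ |h y - p y| + |p y - ∑ i, ∑ j, (a i * C i j) * g (∑ l, Wp i j l * (y : Fin d → ℝ) l + B i j)| := by
        exact abs_sub_le _ _ _
    _ ≤ η / 2 + ∑ i : Fin m, η / (2 * m.succ) := by
        gcongr
        rw [hpv, ← Finset.sum_sub_distrib]
        refine (Finset.abs_sum_le_sum_abs _ _).trans ?_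
        exact Finset.sum_le_sum fun i _ => hterm i
    _ < η := by
        rw [Finset.sum_const, Finset.card_univ, Fintype.card_fin, nsmul_eq_mul]
        have hm1 : (m:ℝ) < m.succ := by exact_mod_cast Nat.lt_succ_self m
        have e : (m : ℝ) * (η / (2 * m.succ)) = (m * η)/(2 * m.succ) := by ring
        have h2 : (m : ℝ) * (η / (2 * m.succ)) < η / 2 := by
          rw [e, div_lt_div_iff₀ (by positivity) (by norm_num : (0:ℝ) < 2)]
          nlinarith
        linarith


/-- Uniform equicontinuity of a compact family. -/
lemma equicont {X : Type*} [MetricSpace X] [CompactSpace X]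
    (V : Set C(X, ℝ)) (hV : IsCompact V) {ε : ℝ} (hε : 0 < ε) :
    ∃ δ > 0, ∀ f ∈ V, ∀ y z : X, dist y z < δ → |f y - f z| < ε := by
  obtain ⟨t, htfin, htcov⟩ := (Metric.totallyBounded_iff.1 hV.totallyBounded) (ε/3) (by linarith)
  -- uniform continuity radius for each continuous map
  have huc : ∀ h : C(X, ℝ), ∃ δ > 0, ∀ y z : X, dist y z < δ → dist (h y) (h z) < ε/3 := by
    intro h
    have := CompactSpace.uniformContinuous_of_continuous h.continuous
    rw [Metric.uniformContinuous_iff] at this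
    obtain ⟨δ, hδ, hcl⟩ := this (ε/3) (by linarith)
    exact ⟨δ, hδ, fun y z hyz => hcl hyz⟩
  choose Dl hDl hDspec using huc
  set s := htfin.toFinset
  by_cases hs : s.Nonempty
  · refine ⟨s.inf' hs Dl, ?_, ?_⟩
    · obtain ⟨h0, hh0, hval⟩ := s.exists_mem_eq_inf' hs Dl
      rw [hval]; exact hDl h0
    · intro f hf y z hyz
      obtain ⟨h, hh, hfh⟩ : ∃ h ∈ t, f ∈ Metric.ball h (ε/3) := by
        have := htcov hf
        simpa using this
      have hhs : h ∈ s := by simp [s, Set.Finite.mem_toFinset]; exact hh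
      have hd : dist y z < Dl h := lt_of_lt_of_le hyz (Finset.inf'_le Dl hhs)
      have h1 : dist (f y) (h y) ≤ dist f h := ContinuousMap.dist_apply_le_dist y
      have h2 : dist (f z) (h z) ≤ dist f h := ContinuousMap.dist_apply_le_dist z
      have h3 : dist (h y) (h z) < ε/3 := hDspec h y z hd
      have h4 : dist f h < ε/3 := by rwa [Metric.mem_ball] at hfh
      calc |f y - f z| = dist (f y) (f z) := (Real.dist_eq _ _).symm
        _ ≤ dist (f y) (h y) + dist (h y) (h z) + dist (h z) (f z) := dist_triangle4 _ _ _ _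
        _ < ε/3 + ε/3 + ε/3 := by
            have h2' : dist (h z) (f z) ≤ dist f h := by rw [dist_comm]; exact h2
            gcongr <;> linarith
        _ = ε := by ring
  · refine ⟨1, one_pos, fun f hf y z _ => ?_⟩
    exfalso
    have := htcov hf
    simp only [Set.mem_iUnion] at this
    obtain ⟨h, hh, _⟩ := this
    exact hs ⟨h, by simp [s, Set.Finite.mem_toFinset]; exact hh⟩

end Aux

set_option maxHeartbeats 1000000 in
/-- Universal approximation for functions with functional coefficients
(Chen–Chen 1995, Theorem 3). -/
theorem belnet_stmt1 {d : ℕ}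
    (H : Set (Fin d → ℝ)) [CompactSpace H]
    (V : Set C(H, ℝ)) (hV : IsCompact V)
    (g : ℝ → ℝ) (hg : IsTauberWiener g)
    (ε : ℝ) (hε : 0 < ε) :
    ∃ (K : ℕ), 0 < K ∧
      ∃ (c : Fin K → (C(H, ℝ) →L[ℝ] ℝ)) (w : Fin K → Fin d → ℝ) (b : Fin K → ℝ),
        ∀ f ∈ V, ∀ y : H,
          |f y - ∑ k, c k f * g (∑ l, w k l * (y : Fin d → ℝ) l + b k)| < ε := by
  by_cases hne : Nonempty H
  case neg =>
    refine ⟨1, one_pos, 0, 0, 0, fun f _ y => absurd ⟨y⟩ hne⟩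
  -- bound on V
  obtain ⟨r, hr⟩ := hV.isBounded.subset_closedBall 0
  set M : ℝ := max r 0 with hM
  have hM0 : 0 ≤ M := le_max_right r 0
  have hMb : ∀ f ∈ V, ∀ z : H, |f z| ≤ M := by
    intro f hf z
    have h1 : dist f 0 ≤ r := by have := hr hf; rwa [Metric.mem_closedBall] at this
    rw [dist_zero_right] at h1
    calc |f z| = ‖f z‖ := (Real.norm_eq_abs _).symm
      _ ≤ ‖f‖ := f.norm_coe_le_norm z
      _ ≤ r := h1
      _ ≤ M := le_max_left r 0
  -- equicontinuity
  obtain ⟨δ, hδ, hec⟩ := equicont V hV (half_pos hε)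
  -- finite cover
  obtain ⟨T, hT⟩ := isCompact_univ.elim_finite_subcover
    (fun z : H => Metric.ball z (δ/2)) (fun z => Metric.isOpen_ball)
    (fun y _ => Set.mem_iUnion.2 ⟨y, Metric.mem_ball_self (by linarith)⟩)
  -- partition of unity
  set φ : H → H → ℝ := fun z y => max (δ - dist y z) 0 with hφ
  have contφ : ∀ z, Continuous (φ z) := fun z =>
    (continuous_const.sub (continuous_id.dist continuous_const)).max continuous_const
  set Dfun : H → ℝ := fun y => ∑ z ∈ T, φ z y with hDfun
  have contD : Continuous Dfun := continuous_finset_sum _ fun z _ => (contφ z)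
  have hDpos : ∀ y, 0 < Dfun y := by
    intro y
    obtain ⟨z, hz, hyz⟩ : ∃ z ∈ T, y ∈ Metric.ball z (δ/2) := by
      have := hT (Set.mem_univ y)
      simpa using this
    refine Finset.sum_pos' (fun w _ => le_max_right _ _) ⟨z, hz, ?_⟩
    rw [Metric.mem_ball] at hyz
    have : 0 < δ - dist y z := by linarith
    simp only [hφ]
    exact lt_max_of_lt_left this
  set ψ : H → C(H, ℝ) := fun z => ⟨fun y => φ z y / Dfun y,
    (contφ z).div contD fun y => ne_of_gt (hDpos y)⟩ with hψ
  have hψ0 : ∀ z y, 0 ≤ ψ z y := fun z y =>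
    div_nonneg (le_max_right _ _) (le_of_lt (hDpos y))
  have hψsum : ∀ y, ∑ z ∈ T, ψ z y = 1 := by
    intro y
    show ∑ z ∈ T, φ z y / Dfun y = 1
    rw [← Finset.sum_div]
    exact div_self (ne_of_gt (hDpos y))
  have hψsupp : ∀ z y, ψ z y ≠ 0 → dist y z < δ := by
    intro z y hzy
    by_contra hc
    push_neg at hc
    apply hzy
    show φ z y / Dfun y = 0
    have : φ z y = 0 := max_eq_right (by linarith)
    rw [this, zero_div]
  -- approximate each ψ z
  have hQ0 : (0:ℝ) < 4 * (M+1) * (T.card+1) := by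
    have h1 : (0:ℝ) ≤ (T.card:ℝ) := Nat.cast_nonneg _
    nlinarith
  set η : ℝ := ε / (4 * (M+1) * (T.card+1)) with hηd
  have hηpos : 0 < η := div_pos hε hQ0
  have happ := fun z : {x // x ∈ T} => propA H hg (ψ z.val) hηpos
  choose n C W B hB using happ
  -- assemble data
  set D := (C(H, ℝ) →L[ℝ] ℝ) × (Fin d → ℝ) × ℝ
  set data : ((z : {x // x ∈ T}) × Fin (n z)) → D :=
    fun p => (C p.1 p.2 • ContinuousMap.evalCLM ℝ p.1.val, W p.1 p.2, B p.1 p.2) with hdata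
  obtain ⟨N, data', hsum⟩ := fin_flatten data
  set dataT : Fin (N+1) → D := Fin.cons ((0, 0, 0) : D) data' with hdataT
  refine ⟨N+1, Nat.succ_pos N, fun k => (dataT k).1,
    fun k => (dataT k).2.1, fun k => (dataT k).2.2,
    fun f hf y => ?_⟩
  set F : D → ℝ := fun dta => dta.1 f * g (∑ l, dta.2.1 l * (y : Fin d → ℝ) l + dta.2.2) with hF
  have e1 : ∑ k : Fin (N+1), (dataT k).1 f
        * g (∑ l, (dataT k).2.1 l * (y : Fin d → ℝ) l
              + (dataT k).2.2)
      = ∑ z ∈ T.attach, f z.val * (∑ j, C z j * g (∑ l, W z j l * (y : Fin d → ℝ) l + B z j)) := by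
    have s1 : ∑ k : Fin (N+1), F (dataT k) = ∑ k : Fin N, F (data' k) := by
      rw [Fin.sum_univ_succ]
      simp only [hdataT, Fin.cons_zero, Fin.cons_succ]
      have : F ((0,0,0) : D) = 0 := by simp [hF]
      rw [this, zero_add]
    have s2 : ∑ k : Fin N, F (data' k) = ∑ p : (z : {x // x ∈ T}) × Fin (n z), F (data p) :=
      hsum F
    have s3 : ∑ p : (z : {x // x ∈ T}) × Fin (n z), F (data p)
        = ∑ z ∈ T.attach, f z.val * (∑ j, C z j * g (∑ l, W z j l * (y : Fin d → ℝ) l + B z j)) := by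
      rw [← Finset.univ_sigma_univ, Finset.sum_sigma]
      refine Finset.sum_congr rfl fun z _ => ?_
      rw [Finset.mul_sum]
      refine Finset.sum_congr rfl fun j _ => ?_
      simp only [hdata, hF, ContinuousLinearMap.smul_apply, smul_eq_mul]
      have : (ContinuousMap.evalCLM ℝ z.val) f = f z.val := rfl
      rw [this]
      ring
    exact (s1.trans s2).trans s3
  rw [e1]
  -- now the two-part estimate
  set A : {x // x ∈ T} → ℝ := fun z => ∑ j, C z j * g (∑ l, W z j l * (y : Fin d → ℝ) l + B z j)
    with hA
  have est1 : |f y - ∑ z ∈ T.attach, f z.val * ψ z.val y| ≤ ε/2 := by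
    have hs1 : ∑ z ∈ T.attach, ψ z.val y = 1 := by
      rw [Finset.sum_attach T (fun z => ψ z y)]
      exact hψsum y
    have e2 : ∑ z ∈ T.attach, (f y - f z.val) * ψ z.val y
        = f y - ∑ z ∈ T.attach, f z.val * ψ z.val y := by
      rw [Finset.sum_congr rfl fun z _ => sub_mul (f y) (f z.val) (ψ z.val y),
        Finset.sum_sub_distrib, ← Finset.mul_sum, hs1, mul_one]
    rw [← e2]
    refine (Finset.abs_sum_le_sum_abs _ _).trans ?_
    have : ∀ z ∈ T.attach, |(f y - f z.val) * ψ z.val y| ≤ (ε/2) * ψ z.val y := by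
      intro z _
      rw [abs_mul, abs_of_nonneg (hψ0 z.val y)]
      rcases eq_or_ne (ψ z.val y) 0 with hz | hz
      · rw [hz]; simp
      · have hd := hψsupp z.val y hz
        have := hec f hf y z.val hd
        have h0 := hψ0 z.val y
        nlinarith [abs_nonneg (f y - f z.val)]
    refine (Finset.sum_le_sum this).trans ?_
    rw [← Finset.mul_sum, hs1, mul_one]
  have est2 : |∑ z ∈ T.attach, f z.val * ψ z.val y - ∑ z ∈ T.attach, f z.val * A z| ≤ ε/4 := by
    rw [← Finset.sum_sub_distrib]
    refine (Finset.abs_sum_le_sum_abs _ _).trans ?_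
    have hterm : ∀ z ∈ T.attach, |f z.val * ψ z.val y - f z.val * A z| ≤ M * η := by
      intro z _
      rw [← mul_sub, abs_mul]
      have h1 : |ψ z.val y - A z| ≤ η := le_of_lt (hB z y)
      exact mul_le_mul (hMb f hf z.val) h1 (abs_nonneg _) hM0
    refine (Finset.sum_le_sum hterm).trans ?_
    rw [Finset.sum_const, Finset.card_attach, nsmul_eq_mul]
    have e3 : (T.card : ℝ) * (M * η) = ((T.card : ℝ) * M * ε) / (4 * (M+1) * (T.card+1)) := by
      rw [hηd]; ring
    rw [e3, div_le_div_iff₀ hQ0 (by norm_num : (0:ℝ) < 4)]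
    nlinarith [Nat.cast_nonneg (α := ℝ) T.card, hε, hM0]
  calc |f y - ∑ z ∈ T.attach, f z.val * A z|
      ≤ |f y - ∑ z ∈ T.attach, f z.val * ψ z.val y|
        + |∑ z ∈ T.attach, f z.val * ψ z.val y - ∑ z ∈ T.attach, f z.val * A z| :=
        abs_sub_le _ _ _
    _ ≤ ε/2 + ε/4 := add_le_add est1 est2
    _ < ε := by linarith
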